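/- arXiv:1304.3373 — 2 statements merged into one kernel-verified Lean document; each statement's English description precedes it below -/
import Mathlib

section
/- Let G be an abelian p-group and H = ⊕ᵢ₌₁ⁿ ⟨zᵢ⟩ a finite subgroup with H ∩ p^ω G = 0, where zᵢ has exponent eᵢ. If (a) whenever eⱼ ≤ eᵢ one has U(zᵢ) ≤ U(zⱼ) ≤ U(p^{eᵢ−eⱼ}zᵢ) and (b) the direct sum is a valuated direct sum, then every endomorphism of H extends to an endomorphism of G. -/
open AddSubgroup

/-- The `p`-height of an element, as an extended natural number. -/
noncomputable def pHeight (p : ℕ) {G : Type*} [AddCommGroup G] (x : G) : ℕ∞ :=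
  sSup {n : ℕ∞ | ∃ m : ℕ, n = (m : ℕ∞) ∧ ∃ y : G, p ^ m • y = x}

/-- `G` is an abelian `p`-group. -/
def IsPGrp (p : ℕ) (G : Type*) [AddCommGroup G] : Prop :=
  ∀ x : G, ∃ n : ℕ, p ^ n • x = 0

/-- `H ∈ Q(G)`: every homomorphism `H → G` extends to an endomorphism of `G`. -/
def InQ {G : Type*} [AddCommGroup G] (H : AddSubgroup G) : Prop :=
  ∀ f : H →+ G, ∃ g : G →+ G, ∀ x : H, g x = f x

/-- `H ∈ P(G)`: every monomorphism `H → G` extends to an endomorphism of `G`. -/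
def InP {G : Type*} [AddCommGroup G] (H : AddSubgroup G) : Prop :=
  ∀ f : H →+ G, Function.Injective f → ∃ g : G →+ G, ∀ x : H, g x = f x

/-- `H ∈ W(G)`: every endomorphism of `H` extends to an endomorphism of `G`. -/
def InW {G : Type*} [AddCommGroup G] (H : AddSubgroup G) : Prop :=
  ∀ f : H →+ H, ∃ g : G →+ G, ∀ x : H, g x = (f x : G)

/-- `K` is an internal direct sum of cyclic subgroups. -/
def IsDirectSumOfCyclics {G : Type*} [AddCommGroup G] (K : AddSubgroup G) : Prop :=
  ∃ (ι : Type) (a : ι → G), (∀ i, a i ∈ K) ∧ (⨆ i, zmultiples (a i)) = K ∧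
    iSupIndep (fun i => zmultiples (a i))

/-- `K` is a `p`-pure subgroup: `pⁿG ∩ K = pⁿK`. -/
def IsPure (p : ℕ) {G : Type*} [AddCommGroup G] (K : AddSubgroup G) : Prop :=
  ∀ n : ℕ, ∀ x ∈ K, (∃ y : G, p ^ n • y = x) → ∃ z ∈ K, p ^ n • z = x

/-- The quotient `G/K` is divisible (equivalently `G = K + pG`). -/
def QuotDivisible (p : ℕ) {G : Type*} [AddCommGroup G] (K : AddSubgroup G) : Prop :=
  ∀ x : G, ∃ y : G, x - p • y ∈ K

/-- The Ulm sequence of `x` has a gap before index `k` (with `h₋₁ = -1`). -/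
def HasGapBefore (p : ℕ) {G : Type*} [AddCommGroup G] (x : G) (k : ℕ) : Prop :=
  if k = 0 then 0 < pHeight p x
  else pHeight p (p ^ (k - 1) • x) + 1 < pHeight p (p ^ k • x)

/-!
Kaplansky's lemma: in a `p`-group `Γ`, if `pᵉx = 0`, the heights `h(pᵏx)` (`k < e`) are finite,
and `pᵉd = 0` with `h(pᵏx) ≤ h(pᵏd)`, then some homomorphism `Γ → G` sends `x` to `d`.
Induct on `e`. Let `j` be the last gap of the Ulm sequence of `x`, `s = h(pʲx)`, and `pʲx = pˢv`.
Then `v` has order `p^(s+e-j)` and `h(pˡv) = l` for `l < s+e-j`, so `⟨v⟩` is pure and bounded,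
hence a direct summand (Zorn). The component of `x` in `⟨v⟩` is `p^(s-j)` times a generator.
The other component `c` satisfies `pʲc = 0` and has the same heights as `x` below `j`, so the
induction hypothesis applies to `c`.

For the theorem, apply the lemma to the image of `zᵢ` in `G / ⊕_{j ≠ i} ⟨z_j⟩`, with `d = f zᵢ`.
By (b), heights in the quotient are at most those in `G`; by (a) and independence,
`U(zᵢ) ≤ U(d)` for every `d ∈ H` killed by `p^eᵢ`; and `H ∩ p^ω G = 0` makes the heights finite.
The resulting maps `ψᵢ` kill `z_j` for `j ≠ i`, so `∑ ψᵢ` extends `f`.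
-/

section Height

variable {p : ℕ} {G G' : Type*} [AddCommGroup G] [AddCommGroup G']

theorem le_pHeight_iff {m : ℕ} {x : G} : (m : ℕ∞) ≤ pHeight p x ↔ ∃ y : G, p ^ m • y = x := by
  refine ⟨fun h => ?_, fun ⟨y, hy⟩ => le_sSup ⟨m, rfl, y, hy⟩⟩
  rcases Nat.eq_zero_or_pos m with rfl | hm
  · exact ⟨x, by simp⟩
  have hlt : ((m - 1 : ℕ) : ℕ∞) < pHeight p x := lt_of_lt_of_le (by exact_mod_cast (by omega)) h
  obtain ⟨_, ⟨k, rfl, y, rfl⟩, hk⟩ := lt_sSup_iff.1 hlt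
  have hmk : m ≤ k := by
    have : m - 1 < k := by exact_mod_cast hk
    omega
  exact ⟨p ^ (k - m) • y, by rw [smul_smul, ← pow_add, Nat.add_sub_cancel' hmk]⟩

theorem le_pHeight_pow_smul (k : ℕ) (y : G) : (k : ℕ∞) ≤ pHeight p (p ^ k • y) :=
  le_pHeight_iff.2 ⟨y, rfl⟩

@[simp]
theorem pHeight_zero : pHeight p (0 : G) = ⊤ :=
  ENat.eq_top_iff_forall_ge.2 fun _ => le_pHeight_iff.2 ⟨0, smul_zero _⟩

theorem pHeight_le_map (g : G →+ G') (x : G) : pHeight p x ≤ pHeight p (g x) :=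
  ENat.forall_natCast_le_iff_le.1 fun m hm => by
    obtain ⟨y, rfl⟩ := le_pHeight_iff.1 hm
    exact le_pHeight_iff.2 ⟨g y, (map_nsmul g _ y).symm⟩

theorem pHeight_le_zsmul (m : ℤ) (x : G) : pHeight p x ≤ pHeight p (m • x) :=
  pHeight_le_map (zsmulAddGroupHom m) x

theorem min_le_pHeight_add (x y : G) : min (pHeight p x) (pHeight p y) ≤ pHeight p (x + y) :=
  ENat.forall_natCast_le_iff_le.1 fun m hm => by
    obtain ⟨x', rfl⟩ := le_pHeight_iff.1 (hm.trans (min_le_left _ _))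
    obtain ⟨y', rfl⟩ := le_pHeight_iff.1 (hm.trans (min_le_right _ _))
    exact le_pHeight_iff.2 ⟨x' + y', smul_add _ _ _⟩

theorem min_le_pHeight_sub (x y : G) : min (pHeight p x) (pHeight p y) ≤ pHeight p (x - y) :=
  ENat.forall_natCast_le_iff_le.1 fun m hm => by
    obtain ⟨x', rfl⟩ := le_pHeight_iff.1 (hm.trans (min_le_left _ _))
    obtain ⟨y', rfl⟩ := le_pHeight_iff.1 (hm.trans (min_le_right _ _))
    exact le_pHeight_iff.2 ⟨x' - y', smul_sub _ _ _⟩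

theorem pHeight_sub_eq_of_lt {x y : G} (h : pHeight p x < pHeight p y) :
    pHeight p (x - y) = pHeight p x := by
  refine le_antisymm ?_ ((le_min le_rfl h.le).trans (min_le_pHeight_sub x y))
  by_contra! hlt
  have := (lt_min hlt h).trans_le (min_le_pHeight_add (x - y) y)
  rw [sub_add_cancel] at this
  exact lt_irrefl _ this

theorem le_pHeight_sum {ι : Type*} (s : Finset ι) (c : ι → G) {a : ℕ∞}
    (h : ∀ i ∈ s, a ≤ pHeight p (c i)) : a ≤ pHeight p (∑ i ∈ s, c i) := by
  classical
  induction s using Finset.induction_on with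
  | empty => simp
  | insert i s hi ih =>
    rw [Finset.sum_insert hi]
    refine le_trans ?_ (min_le_pHeight_add _ _)
    exact le_min (h i (s.mem_insert_self i)) (ih fun j hj => h j (Finset.mem_insert_of_mem hj))

theorem le_pHeight_pow_smul_of_le {m : ℕ} {x : G} (hm : (m : ℕ∞) ≤ pHeight p x) (k : ℕ) :
    ((k + m : ℕ) : ℕ∞) ≤ pHeight p (p ^ k • x) := by
  obtain ⟨y, rfl⟩ := le_pHeight_iff.1 hm
  exact le_pHeight_iff.2 ⟨y, by rw [smul_smul, ← pow_add]⟩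

theorem pHeight_pow_smul_eq_of_le {n l : ℕ} {v : G} (hn : pHeight p (p ^ n • v) = n) (hl : l ≤ n) :
    pHeight p (p ^ l • v) = l := by
  refine le_antisymm ?_ (le_pHeight_pow_smul l v)
  by_contra! h
  have h1 : ((l + 1 : ℕ) : ℕ∞) ≤ pHeight p (p ^ l • v) := by
    exact_mod_cast Order.add_one_le_of_lt h
  have h2 := le_pHeight_pow_smul_of_le h1 (n - l)
  rw [smul_smul, ← pow_add, Nat.sub_add_cancel hl, hn, Nat.cast_le] at h2
  omega

end Height

section PureCyclic

variable {p : ℕ} {G : Type*} [AddCommGroup G]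

theorem exists_zsmul_zsmul_eq_self (hp : p.Prime) {u : ℤ} (hu : ¬(p : ℤ) ∣ u) {x : G} {k : ℕ}
    (hx : p ^ k • x = 0) : ∃ α : ℤ, α • u • x = x := by
  obtain ⟨α, β, hαβ⟩ : IsCoprime u ((p : ℤ) ^ k) :=
    (((Nat.prime_iff_prime_int.1 hp).coprime_iff_not_dvd.2 hu).symm).pow_right
  have hx' : ((p : ℤ) ^ k) • x = 0 := by exact_mod_cast hx
  refine ⟨α, ?_⟩
  rw [smul_smul, ← add_zero (_ • x), ← smul_zero β, ← hx', smul_smul, ← add_smul, hαβ, one_smul]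

theorem pHeight_zsmul_of_not_dvd (hp : p.Prime) {u : ℤ} (hu : ¬(p : ℤ) ∣ u) {x : G} {k : ℕ}
    (hx : p ^ k • x = 0) : pHeight p (u • x) = pHeight p x := by
  refine le_antisymm ?_ (pHeight_le_zsmul u x)
  obtain ⟨α, hα⟩ := exists_zsmul_zsmul_eq_self hp hu hx
  calc pHeight p (u • x) ≤ pHeight p (α • u • x) := pHeight_le_zsmul α _
    _ = pHeight p x := by rw [hα]

theorem pHeight_zsmul_lt (hp : p.Prime) {N : ℕ} {v : G} (hvN : p ^ N • v = 0)
    (hv : ∀ l < N, pHeight p (p ^ l • v) = l) {m : ℤ} (hm : m • v ≠ 0) :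
    pHeight p (m • v) < N := by
  have hm0 : m ≠ 0 := by rintro rfl; simp at hm
  obtain ⟨u, hmu, hu⟩ := (Int.finiteMultiplicity_iff.2 ⟨by simpa using hp.ne_one, hm0⟩ :
    FiniteMultiplicity (p : ℤ) m).exists_eq_pow_mul_and_not_dvd
  set l := multiplicity (p : ℤ) m
  have hmv : m • v = u • p ^ l • v := by
    rw [hmu, mul_comm, mul_smul]; norm_cast
  have hl : l < N := by
    by_contra! hl
    rw [hmv, ← Nat.sub_add_cancel hl, pow_add, mul_smul, hvN, smul_zero, smul_zero] at hm
    exact hm rfl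
  rw [hmv, pHeight_zsmul_of_not_dvd hp hu (k := N) (by rw [smul_comm, hvN, smul_zero]), hv l hl]
  exact_mod_cast hl

theorem mem_sup_of_smul_mem (hp : p.Prime) (htor : ∀ y : G, ∃ k, p ^ k • y = 0) {v : G}
    {M : Submodule ℤ G} (hdisj : Disjoint (ℤ ∙ v) M)
    (hmax : ∀ C : Submodule ℤ G, M < C → ¬Disjoint (ℤ ∙ v) C) {x : G} (hx : p • x ∈ M) :
    x ∈ (ℤ ∙ v) ⊔ M := by
  by_contra hx'
  have hlt : M < M ⊔ ℤ ∙ x := lt_of_le_of_ne le_sup_left fun h => hx' <|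
    Submodule.mem_sup_right (h ▸ Submodule.mem_sup_right (Submodule.mem_span_singleton_self x))
  have hmeet := hmax _ hlt
  rw [Submodule.disjoint_def] at hmeet
  push Not at hmeet
  obtain ⟨_, hαA, hαM', hα0⟩ := hmeet
  obtain ⟨c, hc, _, ht, rfl⟩ := Submodule.mem_sup.1 hαM'
  obtain ⟨t, rfl⟩ := Submodule.mem_span_singleton.1 ht
  by_cases hpt : (p : ℤ) ∣ t
  · obtain ⟨t', rfl⟩ := hpt
    refine hα0 (Submodule.disjoint_def.1 hdisj _ hαA (add_mem hc ?_))
    rw [mul_comm, mul_smul, natCast_zsmul]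
    exact Submodule.smul_mem _ t' hx
  · obtain ⟨k, hk⟩ := htor x
    obtain ⟨β, hβ⟩ := exists_zsmul_zsmul_eq_self hp hpt hk
    refine hx' (hβ ▸ Submodule.smul_mem _ β ?_)
    simpa using sub_mem (Submodule.mem_sup_left hαA) (Submodule.mem_sup_right hc :
      c ∈ (ℤ ∙ v) ⊔ M)

theorem mem_sup_of_smul_mem_sup (hp : p.Prime) (htor : ∀ y : G, ∃ k, p ^ k • y = 0) {N : ℕ}
    {v : G} (hv : p ^ N • v ≠ 0) {M : Submodule ℤ G} (hpM : ∀ y : G, p ^ (N + 1) • y ∈ M)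
    (hdisj : Disjoint (ℤ ∙ v) M) (hmax : ∀ C : Submodule ℤ G, M < C → ¬Disjoint (ℤ ∙ v) C)
    {x : G} (hx : p • x ∈ (ℤ ∙ v) ⊔ M) : x ∈ (ℤ ∙ v) ⊔ M := by
  obtain ⟨_, ha, c, hc, hac⟩ := Submodule.mem_sup.1 hx
  obtain ⟨m, rfl⟩ := Submodule.mem_span_singleton.1 ha
  by_cases hpm : (p : ℤ) ∣ m
  · obtain ⟨m', rfl⟩ := hpm
    have hx' : p • (x - m' • v) ∈ M := by
      rwa [smul_sub, ← hac, mul_smul, natCast_zsmul, add_sub_cancel_left]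
    simpa using add_mem (mem_sup_of_smul_mem hp htor hdisj hmax hx')
      (Submodule.mem_sup_left (Submodule.smul_mem _ m' (Submodule.mem_span_singleton_self v)))
  · have hmem : m • p ^ N • v ∈ M := by
      rw [show m • p ^ N • v = p ^ (N + 1) • x - p ^ N • c by
        rw [pow_succ, mul_smul, ← hac, smul_add, smul_comm]; abel]
      exact sub_mem (hpM x) (Submodule.smul_of_tower_mem _ _ hc)
    have h0 := Submodule.disjoint_def.1 hdisj _ (Submodule.smul_mem _ m
      (Submodule.smul_of_tower_mem _ _ (Submodule.mem_span_singleton_self v))) hmem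
    obtain ⟨k, hk⟩ := htor (p ^ N • v)
    obtain ⟨α, hα⟩ := exists_zsmul_zsmul_eq_self hp hpm hk
    exact absurd (by rw [← hα, h0, smul_zero]) hv

theorem exists_isCompl_span_singleton (hp : p.Prime) (htor : ∀ y : G, ∃ k, p ^ k • y = 0)
    {N : ℕ} {v : G} (hvN : p ^ N • v = 0) (hv : ∀ l < N, pHeight p (p ^ l • v) = l) :
    ∃ C : Submodule ℤ G, IsCompl (ℤ ∙ v) C := by
  obtain _ | N := N
  · exact ⟨⊤, by simp_all [isCompl_bot_top]⟩
  have hv0 : p ^ N • v ≠ 0 := fun h => by simpa [h] using hv N N.lt_succ_self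
  let B : Submodule ℤ G := LinearMap.range (LinearMap.lsmul ℤ G ((p ^ (N + 1) : ℕ) : ℤ))
  have hB : ∀ y : G, p ^ (N + 1) • y ∈ B := fun y =>
    ⟨y, by simp only [LinearMap.lsmul_apply, natCast_zsmul]⟩
  have hAB : Disjoint (ℤ ∙ v) B := by
    refine Submodule.disjoint_def.2 fun _ ha ⟨y, hy⟩ => ?_
    obtain ⟨m, rfl⟩ := Submodule.mem_span_singleton.1 ha
    by_contra hm
    have hN : ((N + 1 : ℕ) : ℕ∞) ≤ pHeight p (m • v) :=
      le_pHeight_iff.2 ⟨y, by simpa only [LinearMap.lsmul_apply, natCast_zsmul] using hy⟩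
    exact (pHeight_zsmul_lt hp hvN hv hm).not_ge hN
  -- A submodule `M ⊇ p^(N+1) G` maximal with `M ⊓ ℤ ∙ v = ⊥` is a complement.
  obtain ⟨M, hBM, hM⟩ := zorn_le_nonempty₀ {C | Disjoint (ℤ ∙ v) C}
    (fun c hc hchain C hC => ⟨sSup c, (hchain.directedOn.disjoint_sSup_right).2 fun D hD => hc hD,
      fun _ => le_sSup⟩) B hAB
  have hmax : ∀ C : Submodule ℤ G, M < C → ¬Disjoint (ℤ ∙ v) C :=
    fun C hMC hC => hMC.not_ge (hM.2 hC hMC.le)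
  have htop : ∀ k (x : G), p ^ k • x = 0 → x ∈ (ℤ ∙ v) ⊔ M := by
    intro k
    induction k with
    | zero => intro x hx; simp_all
    | succ k ih =>
      intro x hx
      refine mem_sup_of_smul_mem_sup hp htor hv0 (fun y => hBM (hB y)) hM.1 hmax (ih _ ?_)
      rwa [smul_smul, ← pow_succ]
  refine ⟨M, hM.1, codisjoint_iff.2 (eq_top_iff.2 fun x _ => ?_)⟩
  obtain ⟨k, hk⟩ := htor x
  exact htop k x hk

theorem addOrderOf_eq_of_pHeight_eq [Fact p.Prime] {N : ℕ} {v : G} (hvN : p ^ N • v = 0)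
    (hv : ∀ l < N, pHeight p (p ^ l • v) = l) : addOrderOf v = p ^ N := by
  obtain _ | N := N
  · simp_all
  exact addOrderOf_eq_prime_pow (fun h => by simpa [h] using hv N N.lt_succ_self) hvN

end PureCyclic

section Extension

variable {Γ G : Type*} [AddCommGroup Γ] [AddCommGroup G]

theorem exists_linearMap_span_singleton_apply {v : Γ} {w : G} (hw : addOrderOf v • w = 0) :
    ∃ θ : (ℤ ∙ v) →ₗ[ℤ] G, θ ⟨v, Submodule.mem_span_singleton_self v⟩ = w := by
  let f : ℤ →+ (ℤ ∙ v) :=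
    (LinearMap.toSpanSingleton ℤ _ ⟨v, Submodule.mem_span_singleton_self v⟩).toAddMonoidHom
  have hf : Function.Surjective f := fun ⟨y, hy⟩ => by
    obtain ⟨m, rfl⟩ := Submodule.mem_span_singleton.1 hy
    exact ⟨m, rfl⟩
  have hker : f.ker ≤ (zmultiplesHom G w).ker := fun m hm => by
    have hmv : m • v = 0 := congrArg Subtype.val hm
    obtain ⟨k, rfl⟩ := addOrderOf_dvd_iff_zsmul_eq_zero.2 hmv
    simp [mul_comm, mul_smul, hw]
  refine ⟨(f.liftOfRightInverse _ (Function.rightInverse_surjInv hf) ⟨_, hker⟩).toIntLinearMap, ?_⟩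
  simpa [f] using f.liftOfRightInverse_comp_apply _ (Function.rightInverse_surjInv hf) ⟨_, hker⟩ 1

theorem exists_addMonoidHom_of_isCompl {v : Γ} {C : Submodule ℤ Γ} (hC : IsCompl (ℤ ∙ v) C)
    {w : G} (hw : addOrderOf v • w = 0) (φ : Γ →+ G) :
    ∃ ψ : Γ →+ G, ψ v = w ∧ ∀ c ∈ C, ψ c = φ c := by
  obtain ⟨θ, hθ⟩ := exists_linearMap_span_singleton_apply hw
  let ψ := LinearMap.ofIsCompl hC θ (φ.toIntLinearMap ∘ₗ C.subtype)
  exact ⟨ψ.toAddMonoidHom,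
    (LinearMap.ofIsCompl_apply_left hC (ψ := φ.toIntLinearMap ∘ₗ C.subtype) _).trans hθ,
    fun c hc => LinearMap.ofIsCompl_apply_right hC (φ := θ) ⟨c, hc⟩⟩

end Extension

theorem exists_last_gap {r : ℕ → ℕ} {e : ℕ} (hr : ∀ k, k + 1 < e → r k < r (k + 1))
    (he : 0 < e) : ∃ j < e, r (e - 1) = r j + (e - 1 - j) ∧ ∀ i < j, r i + (j - i) < r j := by
  have hmono : ∀ i j, i ≤ j → j < e → r i + (j - i) ≤ r j := by
    intro i j hij hje
    induction j, hij using Nat.le_induction with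
    | base => simp
    | succ j hij ih =>
      have := hr j hje
      have := ih (by omega)
      omega
  have hex : ∃ j, j < e ∧ r (e - 1) = r j + (e - 1 - j) := ⟨e - 1, by omega, by simp⟩
  obtain ⟨hje, hlast⟩ := Nat.find_spec hex
  refine ⟨Nat.find hex, hje, hlast, fun i hi => ?_⟩
  have hmin : ¬(i < e ∧ r (e - 1) = r i + (e - 1 - i)) := Nat.find_min hex hi
  have := hmono i _ hi.le hje
  omega

section Kaplansky

variable {p : ℕ} {Γ G : Type*} [AddCommGroup Γ] [AddCommGroup G]

theorem exists_last_gap_pHeight {e : ℕ} (he : 0 < e) {x : Γ}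
    (hfin : ∀ k < e, pHeight p (p ^ k • x) ≠ ⊤) :
    ∃ j < e, ∃ s : ℕ, j ≤ s ∧ pHeight p (p ^ j • x) = s ∧
      pHeight p (p ^ (e - 1) • x) = (s + (e - 1 - j) : ℕ) ∧
      ∀ k < j, pHeight p (p ^ k • x) < (k + (s - j) : ℕ) := by
  set r : ℕ → ℕ := fun k => (pHeight p (p ^ k • x)).toNat
  have hr : ∀ k < e, pHeight p (p ^ k • x) = r k := fun k hk =>
    (ENat.natCast_toNat (hfin k hk)).symm
  have hrk : ∀ k < e, k ≤ r k := fun k hk => by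
    exact_mod_cast hr k hk ▸ le_pHeight_pow_smul (p := p) k x
  have hrmono : ∀ k, k + 1 < e → r k < r (k + 1) := fun k hk => by
    have := le_pHeight_pow_smul_of_le (hr k (by omega)).ge 1
    rw [smul_smul, ← pow_add, add_comm 1 k, hr (k + 1) hk, Nat.cast_le] at this
    omega
  obtain ⟨j, hje, hlast, hgap⟩ := exists_last_gap hrmono he
  refine ⟨j, hje, r j, hrk j hje, hr j hje, by rw [hr _ (by omega), hlast], fun k hk => ?_⟩
  have := hgap k hk
  have := hrk k (by omega)
  rw [hr k (by omega)]
  exact_mod_cast (by omega)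

theorem pHeight_pow_smul_eq_of_pow_smul_eq {j s e : ℕ} (hje : j < e) {x v : Γ}
    (hx : p ^ e • x = 0) (hv : p ^ s • v = p ^ j • x)
    (hlast : pHeight p (p ^ (e - 1) • x) = (s + (e - 1 - j) : ℕ)) :
    p ^ (s + (e - j)) • v = 0 ∧ ∀ l < s + (e - j), pHeight p (p ^ l • v) = l := by
  have hpow : ∀ i, p ^ (s + i) • v = p ^ (j + i) • x := fun i => by
    rw [add_comm s, add_comm j, pow_add, mul_smul, hv, smul_smul, ← pow_add]
  refine ⟨by rw [hpow, Nat.add_sub_cancel' hje.le, hx], fun l hl => ?_⟩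
  refine pHeight_pow_smul_eq_of_le (n := s + (e - 1 - j)) ?_ (by omega)
  rw [hpow, show j + (e - 1 - j) = e - 1 by omega, hlast]

theorem exists_eq_pow_smul_add_of_isCompl (hp : p ≠ 0) {v x : Γ} {C : Submodule ℤ Γ}
    (hC : IsCompl (ℤ ∙ v) C) {j s n : ℕ} (hv : addOrderOf v = p ^ (s + n)) (hjs : j ≤ s)
    (hx : p ^ s • v = p ^ j • x) :
    ∃ t : ℤ, ∃ c ∈ C, x = p ^ (s - j) • (1 + (p : ℤ) ^ n * t) • v + c ∧ p ^ j • c = 0 := by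
  obtain ⟨a, ha, c, hc, rfl⟩ :=
    Submodule.mem_sup.1 (hC.sup_eq_top ▸ Submodule.mem_top : x ∈ (ℤ ∙ v) ⊔ C)
  obtain ⟨m, rfl⟩ := Submodule.mem_span_singleton.1 ha
  have hcj : p ^ j • c = 0 := by
    refine Submodule.disjoint_def.1 hC.disjoint _ ?_ (Submodule.smul_of_tower_mem _ _ hc)
    rw [show p ^ j • c = p ^ s • v - p ^ j • m • v by rw [hx, smul_add]; abel]
    exact sub_mem (Submodule.smul_of_tower_mem _ _ (Submodule.mem_span_singleton_self v))
      (Submodule.smul_of_tower_mem _ _ ha)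
  obtain ⟨t, ht⟩ : (p : ℤ) ^ (s + n) ∣ p ^ j * m - p ^ s := by
    have h0 : ((p : ℤ) ^ j * m - p ^ s) • v = 0 := by
      rw [sub_smul, mul_smul]
      norm_cast
      rw [hx, smul_add, hcj, add_zero, sub_self]
    simpa [hv] using addOrderOf_dvd_iff_zsmul_eq_zero.2 h0
  have hm : m = (p : ℤ) ^ (s - j) * (1 + p ^ n * t) := by
    apply mul_left_cancel₀ (pow_ne_zero j (Int.natCast_ne_zero.2 hp))
    rw [← mul_assoc, ← pow_add, Nat.add_sub_cancel' hjs]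
    linear_combination ht
  refine ⟨t, c, hc, ?_, hcj⟩
  rw [hm, mul_smul]
  norm_cast

theorem pow_smul_pow_smul_one_add_zsmul {j s n : ℕ} (hjs : j ≤ s) {u d : G}
    (hu : p ^ s • u = p ^ j • d) (hd : p ^ (j + n) • d = 0) (t : ℤ) :
    p ^ j • p ^ (s - j) • (1 + (p : ℤ) ^ n * t) • u = p ^ j • d := by
  have huN : p ^ (s + n) • u = 0 := by
    rw [add_comm, pow_add, mul_smul, hu, smul_smul, ← pow_add, add_comm, hd]
  have hcoef : ((p ^ s : ℕ) : ℤ) * (1 + (p : ℤ) ^ n * t) = (p ^ s : ℕ) + t * (p ^ (s + n) : ℕ) := by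
    push_cast; ring
  rw [smul_smul, ← pow_add, Nat.add_sub_cancel' hjs, ← natCast_zsmul, smul_smul, hcoef,
    add_smul, mul_smul, natCast_zsmul, natCast_zsmul, huN, smul_zero, add_zero, hu]

theorem exists_addMonoidHom_apply_eq_of_pHeight_le (hp : p.Prime)
    (htor : ∀ y : Γ, ∃ k, p ^ k • y = 0) {e : ℕ} {x : Γ} {d : G} (hx : p ^ e • x = 0)
    (hd : p ^ e • d = 0) (hfin : ∀ k < e, pHeight p (p ^ k • x) ≠ ⊤)
    (hle : ∀ k < e, pHeight p (p ^ k • x) ≤ pHeight p (p ^ k • d)) :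
    ∃ ψ : Γ →+ G, ψ x = d := by
  induction e using Nat.strong_induction_on generalizing x d with
  | _ e ih =>
  rcases Nat.eq_zero_or_pos e with rfl | he
  · exact ⟨0, by simp_all⟩
  obtain ⟨j, hje, s, hjs, hs, hlast, hgap⟩ := exists_last_gap_pHeight he hfin
  obtain ⟨v, hv⟩ := le_pHeight_iff.1 hs.ge
  obtain ⟨hvN, hvh⟩ := pHeight_pow_smul_eq_of_pow_smul_eq hje hx hv hlast
  obtain ⟨C, hC⟩ := exists_isCompl_span_singleton hp htor hvN hvh
  have hordv : addOrderOf v = p ^ (s + (e - j)) :=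
    haveI := Fact.mk hp; addOrderOf_eq_of_pHeight_eq hvN hvh
  obtain ⟨t, c, hc, hxc, hcj⟩ := exists_eq_pow_smul_add_of_isCompl hp.ne_zero hC hordv hjs hv
  obtain ⟨u, hu⟩ := le_pHeight_iff.1 (hs ▸ hle j hje)
  set d' := p ^ (s - j) • (1 + (p : ℤ) ^ (e - j) * t) • u
  have hcx : ∀ k < j, pHeight p (p ^ k • c) = pHeight p (p ^ k • x) := fun k hk => by
    have ha := (hgap k hk).trans_le <|
      le_pHeight_pow_smul (p := p) _ ((1 + (p : ℤ) ^ (e - j) * t) • v)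
    rw [pow_add, mul_smul] at ha
    rw [eq_sub_of_add_eq' hxc.symm, smul_sub, pHeight_sub_eq_of_lt ha]
  have hdx : ∀ k < j, pHeight p (p ^ k • x) ≤ pHeight p (p ^ k • (d - d')) := fun k hk => by
    have hd' := (hgap k hk).le.trans <|
      le_pHeight_pow_smul (p := p) _ ((1 + (p : ℤ) ^ (e - j) * t) • u)
    rw [pow_add, mul_smul] at hd'
    rw [smul_sub]
    exact (le_min (hle k (by omega)) hd').trans (min_le_pHeight_sub _ _)
  have hd'j : p ^ j • d' = p ^ j • d :=
    pow_smul_pow_smul_one_add_zsmul hjs hu (by rwa [Nat.add_sub_cancel' hje.le]) t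
  obtain ⟨φ, hφ⟩ := ih j hje hcj (d := d - d') (by rw [smul_sub, hd'j, sub_self])
    (fun k hk => hcx k hk ▸ hfin k (by omega)) (fun k hk => (hcx k hk).trans_le (hdx k hk))
  have huN : addOrderOf v • u = 0 := by
    rw [hordv, add_comm, pow_add, mul_smul, hu, smul_smul, ← pow_add,
      Nat.sub_add_cancel hje.le, hd]
  obtain ⟨ψ, hψv, hψC⟩ := exists_addMonoidHom_of_isCompl hC huN φ
  refine ⟨ψ, ?_⟩
  rw [hxc, map_add, map_nsmul, map_zsmul, hψv, hψC c hc, hφ]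
  abel

end Kaplansky

section DirectSum

variable {ι G : Type*} [Fintype ι] [AddCommGroup G]

theorem AddSubgroup.mem_iSup_zmultiples_iff {z : ι → G} {x : G} :
    x ∈ ⨆ i, zmultiples (z i) ↔ ∃ c : ι → ℤ, ∑ i, c i • z i = x := by
  simp_rw [zmultiples_eq_closure, ← closure_iUnion, Set.iUnion_singleton_eq_range,
    ← Submodule.span_int_eq_addSubgroupClosure, Submodule.mem_toAddSubgroup,
    Submodule.mem_span_range_iff_exists_fun]

theorem iSupIndep.zsmul_eq_zero_of_sum_eq_zero {z : ι → G}
    (hind : iSupIndep fun i => zmultiples (z i)) {c : ι → ℤ} (h : ∑ i, c i • z i = 0) (i : ι) :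
    c i • z i = 0 := by
  have := (iSupIndep_map_orderIso_iff AddSubgroup.toIntSubmodule).2 hind
  exact (iSupIndep_iff_finsetSum_eq_zero_imp_eq_zero _).1 this Finset.univ _
    (fun j _ => zsmul_mem (mem_zmultiples (z j)) (c j)) h i (Finset.mem_univ i)

end DirectSum

section Generators

variable {p : ℕ} {G : Type*} [AddCommGroup G]

theorem exists_zsmul_eq_of_pow_smul_eq_zero (hp : p ≠ 0) {z : G} {n k : ℕ}
    (hz : addOrderOf z = p ^ n) (hk : k ≤ n) {c : ℤ} (h : p ^ k • c • z = 0) :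
    ∃ t : ℤ, c • z = t • p ^ (n - k) • z := by
  have h' : ((p : ℤ) ^ k * c) • z = 0 := by rw [mul_smul]; exact_mod_cast h
  have hdvd : (p : ℤ) ^ k * p ^ (n - k) ∣ p ^ k * c := by
    rw [← pow_add, Nat.add_sub_cancel' hk]
    simpa [hz] using addOrderOf_dvd_iff_zsmul_eq_zero.2 h'
  obtain ⟨t, rfl⟩ := (mul_dvd_mul_iff_left (pow_ne_zero k (Int.natCast_ne_zero.2 hp))).1 hdvd
  exact ⟨t, by rw [mul_comm, mul_smul]; norm_cast⟩

variable {ι : Type*} [Fintype ι]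

theorem pHeight_pow_smul_le_of_mem_iSup (hp : p ≠ 0) {z : ι → G} {e : ι → ℕ}
    (hord : ∀ i, addOrderOf (z i) = p ^ e i) (hind : iSupIndep fun i => zmultiples (z i))
    (ha : ∀ i j, e j ≤ e i →
      (∀ k : ℕ, pHeight p (p ^ k • z i) ≤ pHeight p (p ^ k • z j)) ∧
      (∀ k : ℕ, pHeight p (p ^ k • z j) ≤ pHeight p (p ^ k • (p ^ (e i - e j) • z i))))
    {i : ι} {y : G} (hy : y ∈ ⨆ i, zmultiples (z i)) (hyi : p ^ e i • y = 0) (k : ℕ) :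
    pHeight p (p ^ k • z i) ≤ pHeight p (p ^ k • y) := by
  obtain ⟨c, rfl⟩ := AddSubgroup.mem_iSup_zmultiples_iff.1 hy
  have hc : ∀ j, p ^ e i • c j • z j = 0 := fun j => by
    have := hind.zsmul_eq_zero_of_sum_eq_zero (c := fun j => (p ^ e i : ℕ) * c j) (by
      simpa only [mul_smul, natCast_zsmul, Finset.smul_sum] using hyi) j
    simpa only [mul_smul, natCast_zsmul] using this
  rw [Finset.smul_sum]
  refine le_pHeight_sum _ _ fun j _ => ?_
  rcases le_total (e j) (e i) with hji | hij
  · calc pHeight p (p ^ k • z i) ≤ pHeight p (p ^ k • z j) := (ha i j hji).1 k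
      _ ≤ pHeight p (c j • p ^ k • z j) := pHeight_le_zsmul _ _
      _ = pHeight p (p ^ k • c j • z j) := by rw [smul_comm]
  · obtain ⟨t, ht⟩ := exists_zsmul_eq_of_pow_smul_eq_zero hp (hord j) hij (hc j)
    calc pHeight p (p ^ k • z i) ≤ pHeight p (p ^ k • p ^ (e j - e i) • z j) := (ha j i hij).2 k
      _ ≤ pHeight p (t • p ^ k • p ^ (e j - e i) • z j) := pHeight_le_zsmul _ _
      _ = pHeight p (p ^ k • c j • z j) := by rw [ht, smul_comm]

variable [DecidableEq ι]

-- `⨆ j, zmultiples (Function.update z i 0 j)` is the sum of the summands `⟨z j⟩` with `j ≠ i`.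
theorem pHeight_pow_smul_mk_le {z : ι → G}
    (hval : ∀ c : ι → G, (∀ i, c i ∈ zmultiples (z i)) →
      pHeight p (∑ i, c i) = ⨅ i, pHeight p (c i)) (i : ι) (k : ℕ) :
    pHeight p (p ^ k • (z i : G ⧸ ⨆ j, zmultiples (Function.update z i 0 j))) ≤
      pHeight p (p ^ k • z i) := by
  refine ENat.forall_natCast_le_iff_le.1 fun m hm => ?_
  obtain ⟨y', hy'⟩ := le_pHeight_iff.1 hm
  obtain ⟨y, rfl⟩ := QuotientAddGroup.mk_surjective y'
  obtain ⟨c, hc⟩ := AddSubgroup.mem_iSup_zmultiples_iff.1 <|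
    (QuotientAddGroup.eq_iff_sub_mem (x := p ^ m • y) (y := p ^ k • z i)).1 (by simpa using hy')
  let c' : ι → G := fun j => c j • Function.update z i 0 j + (Pi.single i (p ^ k • z i) : ι → G) j
  have hc' : ∀ j, c' j ∈ zmultiples (z j) := fun j => by
    by_cases hj : j = i
    · subst hj; simp [c', nsmul_mem (mem_zmultiples (z j))]
    · simp [c', hj, zsmul_mem (mem_zmultiples (z j))]
  have hsum : ∑ j, c' j = p ^ m • y := by
    simp [c', Finset.sum_add_distrib, hc]
  calc (m : ℕ∞) ≤ pHeight p (p ^ m • y) := le_pHeight_pow_smul m y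
    _ = ⨅ j, pHeight p (c' j) := by rw [← hsum, hval c' hc']
    _ ≤ pHeight p (c' i) := iInf_le _ i
    _ = pHeight p (p ^ k • z i) := by simp [c']

theorem exists_addMonoidHom_apply_generator {G' : Type*} [AddCommGroup G'] (hp : p.Prime)
    (hG : IsPGrp p G) {z : ι → G} (hval : ∀ c : ι → G, (∀ i, c i ∈ zmultiples (z i)) →
      pHeight p (∑ i, c i) = ⨅ i, pHeight p (c i))
    {i : ι} {e : ℕ} (hz : p ^ e • z i = 0) {d : G'} (hd : p ^ e • d = 0)
    (hfin : ∀ k < e, pHeight p (p ^ k • z i) ≠ ⊤)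
    (hle : ∀ k < e, pHeight p (p ^ k • z i) ≤ pHeight p (p ^ k • d)) :
    ∃ ψ : G →+ G', ψ (z i) = d ∧ ∀ j ≠ i, ψ (z j) = 0 := by
  set K := ⨆ j, zmultiples (Function.update z i 0 j)
  have htor : ∀ y : G ⧸ K, ∃ k, p ^ k • y = 0 := fun y => by
    obtain ⟨y, rfl⟩ := QuotientAddGroup.mk_surjective y
    obtain ⟨k, hk⟩ := hG y
    exact ⟨k, by rw [← QuotientAddGroup.mk_nsmul, hk, QuotientAddGroup.mk_zero]⟩
  have hmk := pHeight_pow_smul_mk_le (p := p) hval i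
  obtain ⟨ψ, hψ⟩ := exists_addMonoidHom_apply_eq_of_pHeight_le hp htor (x := (z i : G ⧸ K))
    (by rw [← QuotientAddGroup.mk_nsmul, hz, QuotientAddGroup.mk_zero]) hd
    (fun k hk => ne_top_of_le_ne_top (hfin k hk) (hmk k)) (fun k hk => (hmk k).trans (hle k hk))
  refine ⟨ψ.comp (QuotientAddGroup.mk' K), hψ, fun j hj => ?_⟩
  have hzK : z j ∈ K := mem_iSup_of_mem j (by simp [hj])
  simp [(QuotientAddGroup.eq_zero_iff _).2 hzK]

end Generators

theorem stmt13 {G : Type*} [AddCommGroup G] (p : ℕ) (hp : p.Prime) (hG : IsPGrp p G)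
    (n : ℕ) (z : Fin n → G) (e : Fin n → ℕ) (hord : ∀ i, addOrderOf (z i) = p ^ e i)
    (hind : iSupIndep (fun i => zmultiples (z i)))
    (H : AddSubgroup G) (hH : H = ⨆ i, zmultiples (z i))
    (hUlm : ∀ x ∈ H, (∀ m : ℕ, ∃ y : G, p ^ m • y = x) → x = 0)
    (ha : ∀ i j, e j ≤ e i →
      (∀ k : ℕ, pHeight p (p ^ k • z i) ≤ pHeight p (p ^ k • z j)) ∧
      (∀ k : ℕ, pHeight p (p ^ k • z j) ≤ pHeight p (p ^ k • (p ^ (e i - e j) • z i))))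
    (hval : ∀ c : Fin n → G, (∀ i, c i ∈ zmultiples (z i)) →
      pHeight p (∑ i, c i) = ⨅ i, pHeight p (c i)) :
    InW H := by
  intro f
  have hzH : ∀ i, z i ∈ H := fun i => hH ▸ mem_iSup_of_mem i (mem_zmultiples (z i))
  let d : Fin n → G := fun i => f ⟨z i, hzH i⟩
  have hz : ∀ i, p ^ e i • z i = 0 := fun i => hord i ▸ addOrderOf_nsmul_eq_zero (z i)
  have hd : ∀ i, p ^ e i • d i = 0 := fun i => by
    have : p ^ e i • (⟨z i, hzH i⟩ : H) = 0 := Subtype.ext (hz i)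
    simp only [d, ← AddSubgroup.coe_nsmul, ← map_nsmul, this, map_zero, ZeroMemClass.coe_zero]
  have hfin : ∀ i, ∀ k < e i, pHeight p (p ^ k • z i) ≠ ⊤ := fun i k hk htop =>
    nsmul_ne_zero_of_lt_addOrderOf (pow_ne_zero _ hp.ne_zero)
      (hord i ▸ Nat.pow_lt_pow_right hp.one_lt hk)
      (hUlm _ (nsmul_mem (hzH i) _) fun m => le_pHeight_iff.1 (htop ▸ le_top))
  choose ψ hψi hψj using fun i => exists_addMonoidHom_apply_generator hp hG hval (hz i) (hd i)
    (hfin i) fun k _ =>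
      pHeight_pow_smul_le_of_mem_iSup hp.ne_zero hord hind ha (hH ▸ (f _).2) (hd i) k
  have hψ : ∀ j, (∑ i, ψ i) (z j) = d j := fun j => by
    rw [AddMonoidHom.finsetSum_apply,
      Finset.sum_eq_single j (fun i _ hij => hψj i j (Ne.symm hij)) (by simp), hψi]
  refine ⟨∑ i, ψ i, fun x => ?_⟩
  obtain ⟨c, hc⟩ := AddSubgroup.mem_iSup_zmultiples_iff.1
    (hH ▸ x.2 : (x : G) ∈ ⨆ i, zmultiples (z i))
  have hx : x = ∑ i, c i • ⟨z i, hzH i⟩ := Subtype.ext (by simp [hc])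
  calc (∑ i, ψ i) x = ∑ j, c j • (∑ i, ψ i) (z j) := by simp only [← hc, map_sum, map_zsmul]
    _ = f x := by simp [hx, hψ, d]
end

section
/- Let G be an abelian p-group and H = ⊕ᵢ ⟨zᵢ⟩ a finite subgroup with H ∩ p^ω G = 0 and exp(zᵢ) = eᵢ. If every endomorphism of H extends to an endomorphism of G, then whenever eⱼ ≤ eᵢ one has U(zᵢ) ≤ U(zⱼ) ≤ U(p^{eᵢ−eⱼ}zᵢ) componentwise. -/
open AddSubgroup

/-!
Since `H` is the direct sum of the cyclic groups `⟨zᵢ⟩`, sending `zᵢ` to any `w ∈ H` whose order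
divides that of `zᵢ`, and the other generators to `0`, defines an endomorphism of `H`. Extending
it to `G` and using that homomorphisms do not decrease heights gives `U(zᵢ) ≤ U(w)`. Take
`w = zⱼ` for the first inequality, and `zⱼ ↦ p^(eᵢ - eⱼ) zᵢ` for the second.
-/

lemma pHeight_le_pHeight_map (p : ℕ) {G G' : Type*} [AddCommGroup G] [AddCommGroup G']
    (g : G →+ G') (x : G) : pHeight p x ≤ pHeight p (g x) := by
  apply sSup_le_sSup
  rintro t ⟨m, rfl, y, rfl⟩
  exact ⟨m, rfl, g y, (map_nsmul g _ y).symm⟩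

lemma AddMonoidHom.exists_comp_apply_eq_of_surjective {A B C : Type*} [AddGroup A] [AddGroup B]
    [AddGroup C] (q : A →+ B) (hq : Function.Surjective q) (g : A →+ C) (hker : q.ker ≤ g.ker) :
    ∃ f : B →+ C, ∀ x, f (q x) = g x :=
  ⟨q.liftOfSurjective hq ⟨g, hker⟩, q.liftOfRightInverse_comp_apply _ _ ⟨g, hker⟩⟩

lemma exists_addMonoidHom_zmultiples_apply_eq {G M : Type*} [AddCommGroup G] [AddCommGroup M]
    {z : G} {w : M} (h : addOrderOf w ∣ addOrderOf z) :
    ∃ φ : zmultiples z →+ M, φ ⟨z, mem_zmultiples z⟩ = w := by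
  let q : ℤ →+ zmultiples z :=
    (zmultiplesHom G z).codRestrict _ fun k => zsmul_mem_zmultiples z k
  have hq : Function.Surjective q := fun ⟨_, hx⟩ =>
    let ⟨k, hk⟩ := mem_zmultiples_iff.mp hx
    ⟨k, Subtype.ext hk⟩
  have hker : q.ker ≤ (zmultiplesHom M w).ker := fun k hk => by
    have hkz : k • z = 0 := congrArg Subtype.val hk
    rw [← addOrderOf_dvd_iff_zsmul_eq_zero] at hkz
    exact addOrderOf_dvd_iff_zsmul_eq_zero.mp ((Int.natCast_dvd_natCast.mpr h).trans hkz)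
  obtain ⟨φ, hφ⟩ := q.exists_comp_apply_eq_of_surjective hq _ hker
  have hq1 : q 1 = ⟨z, mem_zmultiples z⟩ := Subtype.ext (one_zsmul z)
  exact ⟨φ, by rw [← hq1, hφ, zmultiplesHom_apply, one_zsmul]⟩

lemma iSupIndep.exists_addMonoidHom_iSup_apply {ι G M : Type*} [AddCommGroup G]
    [AddCommGroup M] {A : ι → AddSubgroup G} (hA : iSupIndep A) (φ : ∀ i, A i →+ M) :
    ∃ f : ↥(⨆ i, A i) →+ M, ∀ i (x : A i), f ⟨x, le_iSup A i x.2⟩ = φ i x := by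
  classical
  let L : (Π₀ i, A i) →+ G := DFinsupp.sumAddHom fun i => (A i).subtype
  have hL : ∀ i (x : A i), L (DFinsupp.single i x) = x := fun i x => by simp [L]
  let q : (Π₀ i, A i) →+ ↥(⨆ i, A i) := L.codRestrict _ fun d =>
    dfinsuppSumAddHom_mem _ d _ fun i _ => le_iSup A i (d i).2
  have hq : Function.Surjective q := fun y => by
    have hrange : (⨆ i, A i) ≤ L.range := iSup_le fun i x hx => ⟨DFinsupp.single i ⟨x, hx⟩, hL i _⟩
    obtain ⟨d, hd⟩ := hrange y.2
    exact ⟨d, Subtype.ext hd⟩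
  have hker : q.ker ≤ (DFinsupp.sumAddHom φ).ker := fun d hd => by
    have hLd : L d = 0 := congrArg Subtype.val hd
    rw [AddMonoidHom.mem_ker, hA.dfinsuppSumAddHom_injective (hLd.trans (map_zero L).symm),
      map_zero]
  obtain ⟨f, hf⟩ := q.exists_comp_apply_eq_of_surjective hq _ hker
  refine ⟨f, fun i x => ?_⟩
  simpa [q, hL] using hf (DFinsupp.single i x)

lemma iSupIndep.exists_addMonoidHom_iSup_zmultiples_apply {ι G M : Type*} [AddCommGroup G]
    [AddCommGroup M] {z : ι → G} (hz : iSupIndep fun i => zmultiples (z i)) {w : ι → M}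
    (hw : ∀ i, addOrderOf (w i) ∣ addOrderOf (z i)) :
    ∃ f : ↥(⨆ i, zmultiples (z i)) →+ M,
      ∀ i, f ⟨z i, AddSubgroup.mem_iSup_of_mem i (mem_zmultiples (z i))⟩ = w i := by
  choose φ hφ using fun i => exists_addMonoidHom_zmultiples_apply_eq (hw i)
  obtain ⟨f, hf⟩ := hz.exists_addMonoidHom_iSup_apply φ
  exact ⟨f, fun i => (hf i _).trans (hφ i)⟩

lemma InW.pHeight_nsmul_le (p : ℕ) {ι G : Type*} [AddCommGroup G] {z : ι → G}
    (hz : iSupIndep fun i => zmultiples (z i)) {H : AddSubgroup G}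
    (hH : H = ⨆ i, zmultiples (z i)) (hW : InW H) {i : ι} {w : G} (hwH : w ∈ H)
    (hw : addOrderOf w ∣ addOrderOf (z i)) (m : ℕ) :
    pHeight p (m • z i) ≤ pHeight p (m • w) := by
  classical
  subst hH
  obtain ⟨f, hf⟩ := hz.exists_addMonoidHom_iSup_zmultiples_apply
    (w := Pi.single i (⟨w, hwH⟩ : ↥(⨆ i, zmultiples (z i)))) fun j => by
      rcases eq_or_ne j i with rfl | hji
      · simpa using hw
      · simp [Pi.single_eq_of_ne hji]
  obtain ⟨g, hg⟩ := hW f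
  have hgz : g (z i) = w := by
    simpa [hf] using hg ⟨z i, AddSubgroup.mem_iSup_of_mem i (mem_zmultiples (z i))⟩
  simpa [hgz] using pHeight_le_pHeight_map p g (m • z i)

theorem stmt14_general {G : Type*} [AddCommGroup G] (p : ℕ)
    (n : ℕ) (z : Fin n → G) (e : Fin n → ℕ) (hord : ∀ i, addOrderOf (z i) = p ^ e i)
    (hind : iSupIndep (fun i => zmultiples (z i)))
    (H : AddSubgroup G) (hH : H = ⨆ i, zmultiples (z i))
    (hW : InW H) :
    ∀ i j, e j ≤ e i →
      (∀ k : ℕ, pHeight p (p ^ k • z i) ≤ pHeight p (p ^ k • z j)) ∧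
      (∀ k : ℕ, pHeight p (p ^ k • z j) ≤ pHeight p (p ^ k • (p ^ (e i - e j) • z i))) := by
  intro i j hji
  have hzH : ∀ i, z i ∈ H := fun i => hH ▸ AddSubgroup.mem_iSup_of_mem i (mem_zmultiples (z i))
  have hzj : addOrderOf (z j) ∣ addOrderOf (z i) := by
    rw [hord, hord]
    exact pow_dvd_pow p hji
  have hpzi : addOrderOf (p ^ (e i - e j) • z i) ∣ addOrderOf (z j) := by
    rw [hord]
    apply addOrderOf_dvd_of_nsmul_eq_zero
    rw [← mul_nsmul, ← pow_add, Nat.sub_add_cancel hji, ← hord]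
    exact addOrderOf_nsmul_eq_zero _
  exact ⟨fun k => hW.pHeight_nsmul_le p hind hH (hzH j) hzj (p ^ k),
    fun k => hW.pHeight_nsmul_le p hind hH (H.nsmul_mem (hzH i) _) hpzi (p ^ k)⟩

theorem stmt14 {G : Type*} [AddCommGroup G] (p : ℕ) (hp : p.Prime) (hG : IsPGrp p G)
    (n : ℕ) (z : Fin n → G) (e : Fin n → ℕ) (hord : ∀ i, addOrderOf (z i) = p ^ e i)
    (hind : iSupIndep (fun i => zmultiples (z i)))
    (H : AddSubgroup G) (hH : H = ⨆ i, zmultiples (z i))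
    (hUlm : ∀ x ∈ H, (∀ m : ℕ, ∃ y : G, p ^ m • y = x) → x = 0)
    (hW : InW H) :
    ∀ i j, e j ≤ e i →
      (∀ k : ℕ, pHeight p (p ^ k • z i) ≤ pHeight p (p ^ k • z j)) ∧
      (∀ k : ℕ, pHeight p (p ^ k • z j) ≤ pHeight p (p ^ k • (p ^ (e i - e j) • z i))) :=
  stmt14_general p n z e hord hind H hH hW
end
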